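/- arXiv:2203.14778 — 3 statements merged into one kernel-verified Lean document; each statement's English description precedes it below -/
import Mathlib

section
/- Let E(x,t) be the Stokes fundamental solution in ℝ³, whose (i,j) entry is E_{ij}(x,t) = (4πt)^{−3/2} e^{−|x|²/4t} δ_{ij} + ∫_t^∞ (4πs)^{−3/2} ∂_i∂_j(e^{−|x|²/4s}) ds. Then for every nonnegative integer j there exists a constant C_j > 0 such that |∇ʲ E(x,t)| ≤ C_j (|x|² + t)^{−(3+j)/2} for all x ∈ ℝ³ and t > 0. For concreteness, prove the case j = 0: |E(x,t)| ≤ C₀(|x|²+t)^{−3/2} for all x ∈ ℝ³, t > 0. -/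
open MeasureTheory

/-- The `(i,j)` entry of the Stokes fundamental solution
`E(x,t) = (4πt)^{-3/2} e^{-|x|²/4t} 𝕀 + ∫_t^∞ (4πs)^{-3/2} ∇²(e^{-|x|²/4s}) ds`. -/
noncomputable def stokesFundamental (x : EuclideanSpace ℝ (Fin 3)) (t : ℝ)
    (i j : Fin 3) : ℝ :=
  (4 * Real.pi * t) ^ (-(3:ℝ)/2) * Real.exp (-‖x‖^2 / (4*t)) *
      (if i = j then (1:ℝ) else 0)
    + ∫ s in Set.Ioi t,
        (4 * Real.pi * s) ^ (-(3:ℝ)/2) *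
          fderiv ℝ (fun y => fderiv ℝ
              (fun z : EuclideanSpace ℝ (Fin 3) => Real.exp (-‖z‖^2 / (4*s)))
              y (EuclideanSpace.single j 1))
            x (EuclideanSpace.single i 1)

/-! The heat-kernel factor obeys `t^{-p} e^{-r²/4t} ≤ (4p)^p (r² + t)^{-p}`, because
`r² + t ≤ 4pt e^{r²/4pt}`. The Hessian of `e^{-|x|²/4s}` is at most `e^{-|x|²/4s} (|x|² + s)/s²`
entrywise, so the same inequality bounds the integrand of the correction term by
`C (|x|² + s)^{-5/2}`, whose integral over `(t, ∞)` is `(2/3) C (|x|² + t)^{-3/2}`. -/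

open Set Filter Real Topology

section Gaussian

variable {E : Type*} [NormedAddCommGroup E] [InnerProductSpace ℝ E]

theorem hasFDerivAt_exp_neg_norm_sq_div (c : ℝ) (y : E) :
    HasFDerivAt (fun z : E => exp (-‖z‖ ^ 2 / c))
      (exp (-‖y‖ ^ 2 / c) • ((-2 / c) • innerSL ℝ y)) y := by
  have h : HasFDerivAt (fun z : E => -‖z‖ ^ 2 / c) ((-2 / c) • innerSL ℝ y) y := by
    have h₀ := (hasStrictFDerivAt_norm_sq y).hasFDerivAt.const_mul (-1 / c)
    rw [show (-2 / c) • innerSL ℝ y = (-1 / c) • (2 • innerSL ℝ y : E →L[ℝ] ℝ) by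
      ext v
      simp only [smul_apply, innerSL_apply_apply, smul_eq_mul, nsmul_eq_mul,
        Nat.cast_ofNat]
      ring]
    exact h₀.congr_of_eventuallyEq (.of_forall fun z => by ring)
  exact h.exp

theorem fderiv_exp_neg_norm_sq_div_apply (c : ℝ) (y v : E) :
    fderiv ℝ (fun z : E => exp (-‖z‖ ^ 2 / c)) y v
      = exp (-‖y‖ ^ 2 / c) * (-2 / c * inner ℝ y v) := by
  simp [(hasFDerivAt_exp_neg_norm_sq_div c y).fderiv]

theorem fderiv_fderiv_exp_neg_norm_sq_div_apply (c : ℝ) (x u v : E) :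
    fderiv ℝ (fun y => fderiv ℝ (fun z : E => exp (-‖z‖ ^ 2 / c)) y v) x u
      = exp (-‖x‖ ^ 2 / c) * (4 / c ^ 2 * inner ℝ x u * inner ℝ x v - 2 / c * inner ℝ u v) := by
  simp_rw [fderiv_exp_neg_norm_sq_div_apply]
  have hw : HasFDerivAt (fun y : E => -2 / c * inner ℝ y v) ((-2 / c) • innerSL ℝ v) x := by
    have := ((innerSL ℝ v).hasFDerivAt (x := x)).const_mul (-2 / c)
    simpa [real_inner_comm] using this
  have hprod : HasFDerivAt (fun y => exp (-‖y‖ ^ 2 / c) * (-2 / c * inner ℝ y v)) _ x :=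
    (hasFDerivAt_exp_neg_norm_sq_div c x).mul hw
  rw [hprod.fderiv]
  simp only [add_apply, smul_apply, innerSL_apply_apply,
    real_inner_comm, smul_eq_mul]
  ring

theorem abs_fderiv_fderiv_exp_neg_norm_sq_div_le {c : ℝ} (hc : 0 < c) (x : E) {u v : E}
    (hu : ‖u‖ ≤ 1) (hv : ‖v‖ ≤ 1) :
    |fderiv ℝ (fun y => fderiv ℝ (fun z : E => exp (-‖z‖ ^ 2 / c)) y v) x u|
      ≤ exp (-‖x‖ ^ 2 / c) * (4 / c ^ 2 * ‖x‖ ^ 2 + 2 / c) := by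
  rw [fderiv_fderiv_exp_neg_norm_sq_div_apply, abs_mul, abs_of_pos (exp_pos _)]
  gcongr
  have hxu : |inner ℝ x u| ≤ ‖x‖ :=
    (abs_real_inner_le_norm x u).trans (mul_le_of_le_one_right (norm_nonneg x) hu)
  have hxv : |inner ℝ x v| ≤ ‖x‖ :=
    (abs_real_inner_le_norm x v).trans (mul_le_of_le_one_right (norm_nonneg x) hv)
  have huv : |inner ℝ u v| ≤ 1 :=
    (abs_real_inner_le_norm u v).trans (mul_le_one₀ hu (norm_nonneg v) hv)
  calc _ ≤ |4 / c ^ 2 * inner ℝ x u * inner ℝ x v| + |2 / c * inner ℝ u v| := abs_sub _ _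
    _ ≤ 4 / c ^ 2 * (‖x‖ * ‖x‖) + 2 / c * 1 := by
      simp only [abs_mul, abs_of_pos (by positivity : 0 < 4 / c ^ 2),
        abs_of_pos (by positivity : 0 < 2 / c), mul_assoc]
      gcongr
    _ = _ := by ring

end Gaussian

theorem rpow_neg_mul_exp_neg_sq_div_le {p : ℝ} (hp : 1 ≤ 4 * p) (r : ℝ) {t : ℝ} (ht : 0 < t) :
    t ^ (-p) * exp (-r ^ 2 / (4 * t)) ≤ (4 * p) ^ p * (r ^ 2 + t) ^ (-p) := by
  have hp0 : 0 < p := by linarith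
  set u := r ^ 2 / (4 * p * t) with hu
  have hbase : r ^ 2 + t ≤ 4 * p * t * exp u := by
    have hr : 4 * p * t * u = r ^ 2 := by rw [hu]; field_simp
    nlinarith [add_one_le_exp u, mul_pos hp0 ht]
  have hpow : (r ^ 2 + t) ^ p ≤ (4 * p) ^ p * (t ^ p * exp (r ^ 2 / (4 * t))) := by
    calc (r ^ 2 + t) ^ p ≤ (4 * p * t * exp u) ^ p := rpow_le_rpow (by positivity) hbase hp0.le
      _ = (4 * p) ^ p * (t ^ p * exp (r ^ 2 / (4 * t))) := by
        rw [mul_rpow (by positivity) (exp_pos _).le, mul_rpow (by positivity) ht.le, ← exp_mul,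
          mul_assoc, hu]
        congr 3
        field_simp
  have hX : 0 < t ^ p * exp (r ^ 2 / (4 * t)) := by positivity
  rw [rpow_neg ht.le, rpow_neg (by positivity), neg_div, exp_neg, ← mul_inv, ← div_eq_mul_inv,
    inv_le_comm₀ hX (by positivity), inv_div, div_le_iff₀ (by positivity)]
  linarith

theorem heatKernel_le {p : ℝ} (hp : 1 ≤ 4 * p) (r : ℝ) {t : ℝ} (ht : 0 < t) :
    (4 * π * t) ^ (-p) * exp (-r ^ 2 / (4 * t))
      ≤ (4 * π) ^ (-p) * (4 * p) ^ p * (r ^ 2 + t) ^ (-p) := by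
  rw [mul_rpow (by positivity) ht.le, mul_assoc, mul_assoc]
  exact mul_le_mul_of_nonneg_left (rpow_neg_mul_exp_neg_sq_div_le hp r ht) (by positivity)

theorem heatKernel_mul_hessian_le {p : ℝ} (hp : 0 ≤ p) (r : ℝ) {s : ℝ} (hs : 0 < s) :
    (4 * π * s) ^ (-p) * (exp (-r ^ 2 / (4 * s)) * (4 / (4 * s) ^ 2 * r ^ 2 + 2 / (4 * s)))
      ≤ (4 * π) ^ (-p) * (4 * (p + 2)) ^ (p + 2) * (r ^ 2 + s) ^ (-(p + 1)) := by
  have hrs : 0 < r ^ 2 + s := by positivity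
  have hfac : 4 / (4 * s) ^ 2 * r ^ 2 + 2 / (4 * s) ≤ (r ^ 2 + s) / s ^ 2 := by
    have hdiff : (r ^ 2 + s) / s ^ 2 - (4 / (4 * s) ^ 2 * r ^ 2 + 2 / (4 * s))
        = (3 * r ^ 2 + 2 * s) / (4 * s ^ 2) := by
      field_simp; ring
    linarith [show 0 ≤ (3 * r ^ 2 + 2 * s) / (4 * s ^ 2) by positivity]
  have hs2 : s ^ (-p) / s ^ 2 = s ^ (-(p + 2)) := by
    rw [← rpow_natCast, ← rpow_sub hs, Nat.cast_ofNat]; ring_nf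
  have hrs1 : (r ^ 2 + s) * (r ^ 2 + s) ^ (-(p + 2)) = (r ^ 2 + s) ^ (-(p + 1)) := by
    rw [← rpow_one_add' hrs.le (by linarith)]; ring_nf
  calc (4 * π * s) ^ (-p) * (exp (-r ^ 2 / (4 * s)) * (4 / (4 * s) ^ 2 * r ^ 2 + 2 / (4 * s)))
      ≤ (4 * π * s) ^ (-p) * (exp (-r ^ 2 / (4 * s)) * ((r ^ 2 + s) / s ^ 2)) := by gcongr
    _ = (4 * π) ^ (-p) * (r ^ 2 + s) * (s ^ (-(p + 2)) * exp (-r ^ 2 / (4 * s))) := by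
      rw [mul_rpow (by positivity) hs.le, ← hs2]; ring
    _ ≤ (4 * π) ^ (-p) * (r ^ 2 + s) * ((4 * (p + 2)) ^ (p + 2) * (r ^ 2 + s) ^ (-(p + 2))) :=
      mul_le_mul_of_nonneg_left (rpow_neg_mul_exp_neg_sq_div_le (by linarith) r hs)
        (by positivity)
    _ = (4 * π) ^ (-p) * (4 * (p + 2)) ^ (p + 2) * (r ^ 2 + s) ^ (-(p + 1)) := by
      rw [← hrs1]; ring

theorem integral_Ioi_add_rpow_of_lt {a c m : ℝ} (ha : a < -1) (hc : -m < c) :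
    ∫ x in Ioi c, (x + m) ^ a = -(c + m) ^ (a + 1) / (a + 1) := by
  have hd : ∀ x ∈ Ici c, HasDerivAt (fun y => (y + m) ^ (a + 1) / (a + 1)) ((x + m) ^ a) x := by
    intro x hx
    refine ((((hasDerivAt_id' x).add_const m).rpow_const (p := a + 1)
      (Or.inl (show 0 < x + m by linarith [mem_Ici.mp hx]).ne')).div_const (a + 1)).congr_deriv ?_
    rw [add_sub_cancel_right, one_mul, mul_div_cancel_left₀ _ (by linarith)]
  have ht : Tendsto (fun y => (y + m) ^ (a + 1) / (a + 1)) atTop (𝓝 (0 / (a + 1))) := by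
    refine Tendsto.div_const ?_ _
    rw [← neg_neg (a + 1)]
    exact (tendsto_rpow_neg_atTop (by linarith)).comp (tendsto_atTop_add_const_right _ m tendsto_id)
  rw [integral_Ioi_of_hasDerivAt_of_tendsto' hd (integrableOn_add_rpow_Ioi_of_lt ha hc) ht]
  ring

theorem abs_integral_heatKernel_mul_hessian_le {E : Type*} [NormedAddCommGroup E]
    [InnerProductSpace ℝ E] {p : ℝ} (hp : 0 < p) (x : E) {u v : E} (hu : ‖u‖ ≤ 1)
    (hv : ‖v‖ ≤ 1) {t : ℝ} (ht : 0 < t) :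
    |∫ s in Ioi t, (4 * π * s) ^ (-p) *
        fderiv ℝ (fun y => fderiv ℝ (fun z : E => exp (-‖z‖ ^ 2 / (4 * s))) y v) x u|
      ≤ (4 * π) ^ (-p) * (4 * (p + 2)) ^ (p + 2) / p * (‖x‖ ^ 2 + t) ^ (-p) := by
  set K := (4 * π) ^ (-p) * (4 * (p + 2)) ^ (p + 2)
  have hbound : ∀ s ∈ Ioi t, ‖(4 * π * s) ^ (-p) *
      fderiv ℝ (fun y => fderiv ℝ (fun z : E => exp (-‖z‖ ^ 2 / (4 * s))) y v) x u‖
        ≤ K * (s + ‖x‖ ^ 2) ^ (-(p + 1)) := by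
    intro s hs
    have hs0 : 0 < s := ht.trans hs
    rw [norm_mul, norm_of_nonneg (by positivity), norm_eq_abs, add_comm s]
    refine le_trans ?_ (heatKernel_mul_hessian_le hp.le ‖x‖ hs0)
    exact mul_le_mul_of_nonneg_left
      (abs_fderiv_fderiv_exp_neg_norm_sq_div_le (by positivity) x hu hv) (by positivity)
  have hlt : -‖x‖ ^ 2 < t := by linarith [sq_nonneg ‖x‖]
  have hint : IntegrableOn (fun s => K * (s + ‖x‖ ^ 2) ^ (-(p + 1))) (Ioi t) :=
    (integrableOn_add_rpow_Ioi_of_lt (by linarith) hlt).const_mul K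
  rw [← norm_eq_abs]
  refine (norm_integral_le_of_norm_le hint
    ((ae_restrict_iff' measurableSet_Ioi).2 (ae_of_all _ hbound))).trans_eq ?_
  rw [integral_const_mul, integral_Ioi_add_rpow_of_lt (by linarith) hlt,
    show -(p + 1) + 1 = -p by ring, add_comm t]
  field_simp

/-- Pointwise estimate `|E(x,t)| ≤ C (|x|² + t)^{-3/2}` for the Stokes
fundamental solution (the case `j = 0` of `|∇ʲE| ≤ C_j (|x|²+t)^{-(3+j)/2}`). -/
theorem stokesFundamental_pointwise_bound :
    ∃ C : ℝ, 0 < C ∧ ∀ (x : EuclideanSpace ℝ (Fin 3)) (t : ℝ) (i j : Fin 3),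
      0 < t → |stokesFundamental x t i j| ≤ C * (‖x‖^2 + t) ^ (-(3:ℝ)/2) := by
  refine ⟨(4 * π) ^ (-(3 / 2 : ℝ)) * (4 * (3 / 2)) ^ (3 / 2 : ℝ)
    + (4 * π) ^ (-(3 / 2 : ℝ)) * (4 * (3 / 2 + 2)) ^ (3 / 2 + 2 : ℝ) / (3 / 2), by positivity, ?_⟩
  intro x t i j ht
  have hunit (k : Fin 3) : ‖EuclideanSpace.single k (1 : ℝ)‖ ≤ 1 := by simp
  have hδ : |(if i = j then (1 : ℝ) else 0)| ≤ 1 := by split_ifs <;> simp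
  have hheat : |(4 * π * t) ^ (-(3 / 2 : ℝ)) * exp (-‖x‖ ^ 2 / (4 * t)) *
      (if i = j then (1 : ℝ) else 0)|
        ≤ (4 * π) ^ (-(3 / 2 : ℝ)) * (4 * (3 / 2)) ^ (3 / 2 : ℝ) * (‖x‖ ^ 2 + t) ^ (-(3 / 2 : ℝ)) := by
    rw [abs_mul, abs_of_nonneg (by positivity)]
    exact (mul_le_of_le_one_right (by positivity) hδ).trans (heatKernel_le (by norm_num) ‖x‖ ht)
  have hhess := abs_integral_heatKernel_mul_hessian_le (p := 3 / 2) (by norm_num) x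
    (hunit i) (hunit j) ht
  rw [stokesFundamental, neg_div 2 (3 : ℝ)]
  exact (abs_add_le _ _).trans ((add_le_add hheat hhess).trans_eq (by ring))
end

section
/- Let R > 0, ζ ∈ ℝ³, 3/2 < q < ∞ and fix r ∈ (1, 3/2). Let g : ℝ³ × ℝ → ℝ be measurable with g(·,τ) supported in the ball B_R for each τ and sup_τ (‖g(·,τ)‖_{L^q(B_R)} + ‖g(·,τ)‖_{L^r(B_R)}) =: K < ∞. Then there is C = C(q,r,R) such that for all x ∈ ℝ³ and t ∈ ℝ, ∫₀^∞ ∫_{B_R} |g(y, t−s)| (|x + ζs − y|² + s)^{−3/2} dy ds ≤ C K. -/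
/-!
By Hölder's inequality in `y` with exponents `p, p'`, the inner integral at time `s` is at most
`K` times the `L^{p'}` norm of the kernel `y ↦ (‖c - y‖² + s)^{-3/2}`. The substitution
`y = c + √s • w` shows that this norm is `D_p · s^{-3/(2p)}` with `D_p` independent of `c`, finite
because `3 < 3p'`. Taking `p = q` gives a power integrable at `0`, taking `p = r` one integrable
at `∞`, so the `s`-integrand is bounded by `K · max D_q D_r · min (s^{-3/(2q)}, s^{-3/(2r)})`.
-/
open MeasureTheory Module Set
open scoped ENNReal

lemma lintegral_enorm_mul_le_eLpNorm_mul_eLpNorm {α : Type*} [MeasurableSpace α] {μ : Measure α}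
    {p p' : ℝ} (hpp' : p.HolderConjugate p') {f k : α → ℝ} (hf : AEStronglyMeasurable f μ)
    (hk : AEStronglyMeasurable k μ) :
    ∫⁻ y, ‖f y * k y‖ₑ ∂μ ≤ eLpNorm f (ENNReal.ofReal p) μ * eLpNorm k (ENNReal.ofReal p') μ := by
  have : ENNReal.HolderTriple (ENNReal.ofReal p) (ENNReal.ofReal p') 1 :=
    ⟨by simpa using hpp'.inv_add_inv_ennreal⟩
  rw [← eLpNorm_one_eq_lintegral_enorm]
  simpa using eLpNorm_le_eLpNorm_mul_eLpNorm'_of_norm hf hk (· * ·) 1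
    (Filter.Eventually.of_forall fun y => by simp [norm_mul])

section Kernel

variable {E : Type*} [NormedAddCommGroup E] [NormedSpace ℝ E] [FiniteDimensional ℝ E]
  [MeasurableSpace E] [BorelSpace E] (μ : Measure E) [μ.IsAddHaarMeasure]

lemma lintegral_rpow_neg_norm_sq_add (P : ℝ) {s : ℝ} (hs : 0 < s) :
    ∫⁻ z, ENNReal.ofReal ((‖z‖ ^ 2 + s) ^ (-P)) ∂μ =
      ENNReal.ofReal (s ^ (finrank ℝ E / 2 - P)) *
        ∫⁻ w, ENNReal.ofReal ((1 + ‖w‖ ^ 2) ^ (-P)) ∂μ := by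
  set d := finrank ℝ E
  set F : E → ℝ≥0∞ := fun z => ENNReal.ofReal ((‖z‖ ^ 2 + s) ^ (-P))
  have hc : 0 < √s := Real.sqrt_pos.2 hs
  have hcd : √s ^ d = s ^ ((d : ℝ) / 2) := by
    rw [Real.sqrt_eq_rpow, ← Real.rpow_natCast, ← Real.rpow_mul hs.le]
    ring_nf
  have hF_smul : ∀ w : E, F (√s • w) =
      ENNReal.ofReal (s ^ (-P)) * ENNReal.ofReal ((1 + ‖w‖ ^ 2) ^ (-P)) := fun w => by
    rw [← ENNReal.ofReal_mul (by positivity), ← Real.mul_rpow hs.le (by positivity)]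
    simp only [F, norm_smul, mul_pow, Real.norm_eq_abs, sq_abs, Real.sq_sqrt hs.le]
    ring_nf
  have hcd_ne : ENNReal.ofReal (√s ^ d) ≠ 0 := by simp [hc]
  calc ∫⁻ z, F z ∂μ
      = ENNReal.ofReal (√s ^ d) * ((ENNReal.ofReal (√s ^ d))⁻¹ * ∫⁻ z, F z ∂μ) := by
        rw [← mul_assoc, ENNReal.mul_inv_cancel hcd_ne ENNReal.ofReal_ne_top, one_mul]
    _ = ENNReal.ofReal (√s ^ d) * ∫⁻ w, F (√s • w) ∂μ := by
        rw [← lintegral_map (g := fun w => √s • w) (by fun_prop) (by fun_prop),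
          Measure.map_addHaar_smul μ hc.ne', lintegral_smul_measure, abs_of_pos (by positivity),
          ENNReal.ofReal_inv_of_pos (by positivity), smul_eq_mul]
    _ = ENNReal.ofReal (s ^ ((d : ℝ) / 2 - P)) *
          ∫⁻ w, ENNReal.ofReal ((1 + ‖w‖ ^ 2) ^ (-P)) ∂μ := by
        simp_rw [hF_smul]
        rw [lintegral_const_mul' _ _ ENNReal.ofReal_ne_top, ← mul_assoc,
          ← ENNReal.ofReal_mul (by positivity), hcd, ← Real.rpow_add hs, sub_eq_add_neg]

lemma lintegral_rpow_neg_norm_sub_sq_add (c : E) (P : ℝ) {s : ℝ} (hs : 0 < s) :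
    ∫⁻ y, ENNReal.ofReal ((‖c - y‖ ^ 2 + s) ^ (-P)) ∂μ =
      ENNReal.ofReal (s ^ (finrank ℝ E / 2 - P)) *
        ∫⁻ w, ENNReal.ofReal ((1 + ‖w‖ ^ 2) ^ (-P)) ∂μ := by
  simp_rw [norm_sub_rev c]
  rw [lintegral_sub_right_eq_self (fun z => ENNReal.ofReal ((‖z‖ ^ 2 + s) ^ (-P))) c,
    lintegral_rpow_neg_norm_sq_add μ P hs]

lemma exists_eLpNorm_rpow_neg_norm_sub_sq_add_eq {p a : ℝ} (hp : 0 < p)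
    (ha : (finrank ℝ E : ℝ) < 2 * a * p) :
    ∃ D ≠ ∞, ∀ (c : E) {s : ℝ}, 0 < s →
      eLpNorm (fun y => (‖c - y‖ ^ 2 + s) ^ (-a)) (ENNReal.ofReal p) μ =
        D * ENNReal.ofReal (s ^ (finrank ℝ E / (2 * p) - a)) := by
  set I := ∫⁻ w, ENNReal.ofReal ((1 + ‖w‖ ^ 2) ^ (-(a * p))) ∂μ
  have hI : I ≠ ∞ := by
    have := integrable_rpow_neg_one_add_norm_sq (μ := μ) ha
    rw [show -(2 * a * p) / 2 = -(a * p) by ring] at this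
    exact this.lintegral_lt_top.ne
  refine ⟨I ^ (1 / p), ENNReal.rpow_ne_top_of_nonneg (by positivity) hI, fun c s hs => ?_⟩
  have hpow : ∀ y, ‖(‖c - y‖ ^ 2 + s) ^ (-a)‖ₑ ^ p =
      ENNReal.ofReal ((‖c - y‖ ^ 2 + s) ^ (-(a * p))) := fun y => by
    rw [Real.enorm_eq_ofReal (by positivity), ENNReal.ofReal_rpow_of_nonneg (by positivity) hp.le,
      ← Real.rpow_mul (by positivity), neg_mul]
  rw [eLpNorm_eq_lintegral_rpow_enorm_toReal (by simpa using hp) ENNReal.ofReal_ne_top,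
    ENNReal.toReal_ofReal hp.le]
  simp_rw [hpow]
  rw [lintegral_rpow_neg_norm_sub_sq_add μ c _ hs, ENNReal.mul_rpow_of_nonneg _ _ (by positivity),
    ENNReal.ofReal_rpow_of_pos (by positivity), ← Real.rpow_mul hs.le, mul_comm]
  congr 3
  field_simp

lemma exists_lintegral_abs_mul_rpow_neg_norm_sub_sq_add_le [Nontrivial E] {p p' : ℝ}
    (hpp' : p.HolderConjugate p') :
    ∃ D ≠ ∞, ∀ f : E → ℝ, AEStronglyMeasurable f μ → ∀ (c : E) {s : ℝ}, 0 < s →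
      ∫⁻ y, ENNReal.ofReal (|f y| * (‖c - y‖ ^ 2 + s) ^ (-(finrank ℝ E : ℝ) / 2)) ∂μ ≤
        eLpNorm f (ENNReal.ofReal p) μ * D * ENNReal.ofReal (s ^ (-(finrank ℝ E / (2 * p)))) := by
  have hd : (0 : ℝ) < finrank ℝ E := by exact_mod_cast finrank_pos
  obtain ⟨D, hD, hkernel⟩ := exists_eLpNorm_rpow_neg_norm_sub_sq_add_eq μ (a := finrank ℝ E / 2)
    hpp'.symm.pos (by nlinarith [hpp'.symm.lt])
  refine ⟨D, hD, fun f hf c s hs => ?_⟩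
  have hexp : (finrank ℝ E : ℝ) / (2 * p') - finrank ℝ E / 2 = -(finrank ℝ E / (2 * p)) := by
    have := hpp'.inv_add_inv_eq_one
    field_simp
    linear_combination this
  calc ∫⁻ y, ENNReal.ofReal (|f y| * (‖c - y‖ ^ 2 + s) ^ (-(finrank ℝ E : ℝ) / 2)) ∂μ
      = ∫⁻ y, ‖f y * (‖c - y‖ ^ 2 + s) ^ (-(finrank ℝ E / 2 : ℝ))‖ₑ ∂μ := by
        refine lintegral_congr fun y => ?_
        rw [Real.enorm_eq_ofReal_abs, abs_mul, neg_div,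
          abs_of_nonneg (Real.rpow_nonneg (by positivity) _)]
    _ ≤ eLpNorm f (ENNReal.ofReal p) μ *
          eLpNorm (fun y => (‖c - y‖ ^ 2 + s) ^ (-(finrank ℝ E / 2 : ℝ))) (ENNReal.ofReal p') μ :=
        lintegral_enorm_mul_le_eLpNorm_mul_eLpNorm hpp' hf
          (by fun_prop : Measurable _).aestronglyMeasurable
    _ = _ := by rw [hkernel c hs, hexp, mul_assoc]

end Kernel

lemma lintegral_Ioi_min_rpow_neg_lt_top {α β : ℝ} (hα : α < 1) (hβ : 1 < β) :
    ∫⁻ s in Ioi (0 : ℝ), ENNReal.ofReal (min (s ^ (-α)) (s ^ (-β))) < ∞ := by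
  rw [← Ioc_union_Ioi_eq_Ioi zero_le_one,
    lintegral_union measurableSet_Ioi (Ioc_disjoint_Ioi le_rfl)]
  refine ENNReal.add_lt_top.2 ⟨?_, ?_⟩
  · refine (lintegral_mono fun s => ENNReal.ofReal_le_ofReal (min_le_left _ _)).trans_lt ?_
    refine IntegrableOn.setLIntegral_lt_top ?_
    rw [← intervalIntegrable_iff_integrableOn_Ioc_of_le zero_le_one]
    exact intervalIntegral.intervalIntegrable_rpow' (by linarith)
  · refine (lintegral_mono fun s => ENNReal.ofReal_le_ofReal (min_le_right _ _)).trans_lt ?_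
    exact (integrableOn_Ioi_rpow_of_lt (by linarith) zero_lt_one).setLIntegral_lt_top

lemma exists_pos_ofReal_mul_le_ofReal {B : ℝ≥0∞} (hB : B ≠ ∞) :
    ∃ C : ℝ, 0 < C ∧ ∀ K : ℝ, ENNReal.ofReal K * B ≤ ENNReal.ofReal (C * K) := by
  refine ⟨B.toReal + 1, by positivity, fun K => ?_⟩
  rw [mul_comm _ K, ENNReal.ofReal_mul' (by positivity)]
  gcongr
  exact (ENNReal.le_ofReal_iff_toReal_le hB (by positivity)).2 (by linarith)

theorem oseen_spacetime_potential_bounded_general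
    (R q r K : ℝ) (hq : 3/2 < q) (hr1 : 1 < r) (hr2 : r < 3/2)
    (ζ : EuclideanSpace ℝ (Fin 3))
    (g : EuclideanSpace ℝ (Fin 3) → ℝ → ℝ)
    (hmeas : Measurable fun p : EuclideanSpace ℝ (Fin 3) × ℝ => g p.1 p.2)
    (hKq : ∀ τ : ℝ, eLpNorm (fun y => g y τ) (ENNReal.ofReal q) volume ≤
      ENNReal.ofReal K)
    (hKr : ∀ τ : ℝ, eLpNorm (fun y => g y τ) (ENNReal.ofReal r) volume ≤
      ENNReal.ofReal K) :
    ∃ C : ℝ, 0 < C ∧ ∀ (x : EuclideanSpace ℝ (Fin 3)) (t : ℝ),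
      (∫⁻ s in Set.Ioi (0:ℝ), ∫⁻ y in Metric.ball (0 : EuclideanSpace ℝ (Fin 3)) R,
          ENNReal.ofReal (|g y (t - s)| * (‖x + s • ζ - y‖^2 + s) ^ (-(3:ℝ)/2)))
        ≤ ENNReal.ofReal (C * K) := by
  have hslice_bound : ∀ {p : ℝ}, 1 < p →
      (∀ τ, eLpNorm (fun y => g y τ) (ENNReal.ofReal p) volume ≤ ENNReal.ofReal K) →
      ∃ D ≠ ∞, ∀ (x : EuclideanSpace ℝ (Fin 3)) (t : ℝ) {s : ℝ}, 0 < s →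
        ∫⁻ y in Metric.ball 0 R,
          ENNReal.ofReal (|g y (t - s)| * (‖x + s • ζ - y‖ ^ 2 + s) ^ (-(3:ℝ)/2)) ≤
          ENNReal.ofReal K * D * ENNReal.ofReal (s ^ (-(3 / (2 * p)))) := fun hp hK => by
    obtain ⟨D, hD, hbound⟩ := exists_lintegral_abs_mul_rpow_neg_norm_sub_sq_add_le
      (volume : Measure (EuclideanSpace ℝ (Fin 3))) (Real.HolderConjugate.conjExponent hp)
    simp only [finrank_euclideanSpace_fin, Nat.cast_ofNat] at hbound
    refine ⟨D, hD, fun x t s hs => (setLIntegral_le_lintegral _ _).trans ?_⟩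
    grw [hbound (fun y => g y (t - s))
      (hmeas.comp (measurable_id.prodMk measurable_const)).aestronglyMeasurable (x + s • ζ) hs, hK]
  obtain ⟨Dq, hDq, hq_bound⟩ := hslice_bound (by linarith) hKq
  obtain ⟨Dr, hDr, hr_bound⟩ := hslice_bound hr1 hKr
  set M := ∫⁻ s in Ioi (0 : ℝ),
    ENNReal.ofReal (min (s ^ (-(3 / (2 * q)))) (s ^ (-(3 / (2 * r)))))
  have hM : M ≠ ∞ := (lintegral_Ioi_min_rpow_neg_lt_top
    (by rw [div_lt_one (by linarith)]; linarith) (by rw [one_lt_div (by linarith)]; linarith)).ne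
  obtain ⟨C, hC, hCK⟩ := exists_pos_ofReal_mul_le_ofReal
    (ENNReal.mul_ne_top (max_ne_top hDq hDr) hM)
  refine ⟨C, hC, fun x t => ?_⟩
  calc _ ≤ ∫⁻ s in Ioi (0 : ℝ), ENNReal.ofReal K * max Dq Dr *
          ENNReal.ofReal (min (s ^ (-(3 / (2 * q)))) (s ^ (-(3 / (2 * r))))) := by
        refine setLIntegral_mono' measurableSet_Ioi fun s hs => ?_
        rw [ENNReal.ofReal_min, mul_min]
        exact le_min ((hq_bound x t hs).trans (by gcongr; exact le_max_left _ _))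
          ((hr_bound x t hs).trans (by gcongr; exact le_max_right _ _))
    _ = ENNReal.ofReal K * (max Dq Dr * M) := by
        rw [lintegral_const_mul' _ _
          (ENNReal.mul_ne_top ENNReal.ofReal_ne_top (max_ne_top hDq hDr)), mul_assoc]
    _ ≤ ENNReal.ofReal (C * K) := hCK K

/-- Pointwise bound for the Oseen-type space-time potential of a function `g`
supported in the ball `B_R`, uniformly bounded in `L^q ∩ L^r` in the space
variable, with `q > 3/2` and `1 < r < 3/2`. -/
theorem oseen_spacetime_potential_bounded
    (R q r K : ℝ) (hR : 0 < R) (hq : 3/2 < q) (hr1 : 1 < r) (hr2 : r < 3/2)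
    (ζ : EuclideanSpace ℝ (Fin 3))
    (g : EuclideanSpace ℝ (Fin 3) → ℝ → ℝ)
    (hmeas : Measurable fun p : EuclideanSpace ℝ (Fin 3) × ℝ => g p.1 p.2)
    (hsupp : ∀ (τ : ℝ) (y : EuclideanSpace ℝ (Fin 3)), R ≤ ‖y‖ → g y τ = 0)
    (hKq : ∀ τ : ℝ, eLpNorm (fun y => g y τ) (ENNReal.ofReal q) volume ≤
      ENNReal.ofReal K)
    (hKr : ∀ τ : ℝ, eLpNorm (fun y => g y τ) (ENNReal.ofReal r) volume ≤
      ENNReal.ofReal K) :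
    ∃ C : ℝ, 0 < C ∧ ∀ (x : EuclideanSpace ℝ (Fin 3)) (t : ℝ),
      (∫⁻ s in Set.Ioi (0:ℝ), ∫⁻ y in Metric.ball (0 : EuclideanSpace ℝ (Fin 3)) R,
          ENNReal.ofReal (|g y (t - s)| * (‖x + s • ζ - y‖^2 + s) ^ (-(3:ℝ)/2)))
        ≤ ENNReal.ofReal (C * K) :=
  oseen_spacetime_potential_bounded_general R q r K hq hr1 hr2 ζ g hmeas hKq hKr
end

section
/- Let ζ ∈ ℝ³, M ≥ 0, and suppose y, z ∈ ℝ³ and an orthogonal matrix Q satisfy |z − Qy| ≤ M and Qᵀζ = ζ. Then (1+|z|)(1+|ζ||z|+ζ·z) ≤ (1+M)(1+2M|ζ|)(1+|y|)(1+|ζ||y|+ζ·y). -/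
open RealInnerProductSpace Matrix

/-- Comparison of Oseen wake weights under a near-isometric change of
variables: if `|z − Qy| ≤ M` with `Q` orthogonal and `Qᵀζ = ζ`, then
`(1+|z|)(1+|ζ||z|+ζ·z) ≤ (1+M)(1+2M|ζ|)(1+|y|)(1+|ζ||y|+ζ·y)`. -/
theorem wake_weight_comparison
    (Q : Matrix (Fin 3) (Fin 3) ℝ) (hQ : Qᵀ * Q = 1)
    (M : ℝ) (hM : 0 ≤ M)
    (ζ y z : EuclideanSpace ℝ (Fin 3))
    (hzy : ‖z - Matrix.toEuclideanLin Q y‖ ≤ M)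
    (hζ : Matrix.toEuclideanLin Qᵀ ζ = ζ) :
    (1 + ‖z‖) * (1 + ‖ζ‖ * ‖z‖ + ⟪ζ, z⟫) ≤
      (1 + M) * (1 + 2 * M * ‖ζ‖) * (1 + ‖y‖) * (1 + ‖ζ‖ * ‖y‖ + ⟪ζ, y⟫) := by
  set T := Matrix.toEuclideanLin Q
  have hadj : Matrix.toEuclideanLin Qᵀ = LinearMap.adjoint T := by
    rw [← Matrix.conjTranspose_eq_transpose_of_trivial,
      Matrix.toEuclideanLin_conjTranspose_eq_adjoint]
  have hcomp : ∀ v : EuclideanSpace ℝ (Fin 3), Matrix.toEuclideanLin Qᵀ (T v) = v := by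
    intro v
    simp [T, Matrix.toEuclideanLin_apply, Matrix.mulVec_mulVec, hQ]
  have hinner : ∀ v : EuclideanSpace ℝ (Fin 3), ⟪ζ, T v⟫ = ⟪ζ, v⟫ := by
    intro v
    conv_rhs => rw [← hζ, hadj, LinearMap.adjoint_inner_left]
  have hnormT : ‖T y‖ = ‖y‖ := by
    have h2 : ⟪T y, T y⟫ = ⟪y, y⟫ := by
      rw [← LinearMap.adjoint_inner_left, ← hadj, hcomp]
    rw [norm_eq_sqrt_real_inner (T y), norm_eq_sqrt_real_inner y, h2]
  have hb : ‖z‖ ≤ ‖y‖ + M := by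
    calc ‖z‖ = ‖(z - T y) + T y‖ := by rw [sub_add_cancel]
    _ ≤ ‖z - T y‖ + ‖T y‖ := norm_add_le _ _
    _ ≤ M + ‖y‖ := by rw [hnormT]; linarith
    _ = ‖y‖ + M := by ring
  have hiz : ⟪ζ, z⟫ ≤ M * ‖ζ‖ + ⟪ζ, y⟫ := by
    have : ⟪ζ, z⟫ = ⟪ζ, z - T y⟫ + ⟪ζ, y⟫ := by
      rw [← hinner y, ← inner_add_right, sub_add_cancel]
    rw [this]
    have h1 : ⟪ζ, z - T y⟫ ≤ ‖ζ‖ * ‖z - T y‖ := real_inner_le_norm _ _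
    have h2 : ‖ζ‖ * ‖z - T y‖ ≤ ‖ζ‖ * M := by
      exact mul_le_mul_of_nonneg_left hzy (norm_nonneg _)
    nlinarith
  have h3 : 0 ≤ ‖ζ‖ * ‖y‖ + ⟪ζ, y⟫ := by
    have := abs_real_inner_le_norm ζ y
    have := neg_abs_le ⟪ζ, y⟫
    linarith
  have h4 : 0 ≤ ‖ζ‖ * ‖z‖ + ⟪ζ, z⟫ := by
    have := abs_real_inner_le_norm ζ z
    have := neg_abs_le ⟪ζ, z⟫
    linarith
  have ha0 := norm_nonneg y
  have hb0 := norm_nonneg z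
  have hc0 := norm_nonneg ζ
  have hA : 1 + ‖z‖ ≤ (1 + M) * (1 + ‖y‖) := by nlinarith
  have hB : 1 + ‖ζ‖ * ‖z‖ + ⟪ζ, z⟫ ≤ (1 + 2 * M * ‖ζ‖) * (1 + ‖ζ‖ * ‖y‖ + ⟪ζ, y⟫) := by
    have := mul_le_mul_of_nonneg_left hb hc0
    nlinarith [mul_nonneg (mul_nonneg hM hc0) h3]
  calc (1 + ‖z‖) * (1 + ‖ζ‖ * ‖z‖ + ⟪ζ, z⟫)
      ≤ ((1 + M) * (1 + ‖y‖)) * ((1 + 2 * M * ‖ζ‖) * (1 + ‖ζ‖ * ‖y‖ + ⟪ζ, y⟫)) := by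
        apply mul_le_mul hA hB (by linarith) (by positivity)
    _ = (1 + M) * (1 + 2 * M * ‖ζ‖) * (1 + ‖y‖) * (1 + ‖ζ‖ * ‖y‖ + ⟪ζ, y⟫) := by ring
end
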